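/- arXiv:2604.01555 — 2 statements merged into one kernel-verified Lean document; each statement's English description precedes it below -/
import Mathlib

section
/- Let H be a Hermitian matrix with smallest eigenvalue E_GS attained at unit eigenvector ψ. Then for every matrix A, the expectation ⟨ψ| A H A* - (1/2)(H A A* + A A* H) |ψ⟩ is real and nonnegative. -/
/-!
Put `φ = A* ψ`. Since `ψ` is an eigenvector of the Hermitian `H` on both sides (`Hψ = Eψ` and
`ψ* H = E ψ*`), the anticommutator term contributes `E ⟨φ|φ⟩`, so the expectation equals
`⟨φ| H - E |φ⟩`. As `E` is the smallest eigenvalue, `H - E` is positive semidefinite.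
-/

open Matrix ComplexOrder

namespace Matrix

variable {ι 𝕜 : Type*} [Fintype ι] [RCLike 𝕜]

theorem dotProduct_mul_mul_conjTranspose_mulVec (ψ : ι → 𝕜) (A B : Matrix ι ι 𝕜) :
    star ψ ⬝ᵥ (A * B * Aᴴ) *ᵥ ψ = star (Aᴴ *ᵥ ψ) ⬝ᵥ B *ᵥ (Aᴴ *ᵥ ψ) := by
  rw [star_mulVec, conjTranspose_conjTranspose, ← mulVec_mulVec, ← mulVec_mulVec,
    dotProduct_mulVec]

namespace IsHermitian

variable {H : Matrix ι ι 𝕜} {E : ℝ} {ψ : ι → 𝕜}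

theorem star_vecMul_eq_smul_of_mulVec_eq_smul (hH : H.IsHermitian)
    (heig : H *ᵥ ψ = (E : 𝕜) • ψ) : star ψ ᵥ* H = (E : 𝕜) • star ψ := by
  rw [← hH.eq, ← star_mulVec, heig, star_smul, RCLike.star_def, RCLike.conj_ofReal]

theorem dotProduct_mul_add_mul_mulVec_of_mulVec_eq_smul (hH : H.IsHermitian)
    (heig : H *ᵥ ψ = (E : 𝕜) • ψ) (B : Matrix ι ι 𝕜) :
    star ψ ⬝ᵥ (H * B + B * H) *ᵥ ψ = (2 * E : 𝕜) * (star ψ ⬝ᵥ B *ᵥ ψ) := by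
  rw [add_mulVec, dotProduct_add, ← mulVec_mulVec, ← mulVec_mulVec, dotProduct_mulVec,
    hH.star_vecMul_eq_smul_of_mulVec_eq_smul heig, heig, mulVec_smul, smul_dotProduct,
    dotProduct_smul]
  simp only [smul_eq_mul]
  ring

theorem dotProduct_sub_half_anticomm_mulVec_of_mulVec_eq_smul [DecidableEq ι]
    (hH : H.IsHermitian) (heig : H *ᵥ ψ = (E : 𝕜) • ψ) (A : Matrix ι ι 𝕜) :
    star ψ ⬝ᵥ (A * H * Aᴴ - (1 / 2 : 𝕜) • (H * (A * Aᴴ) + (A * Aᴴ) * H)) *ᵥ ψ =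
      star (Aᴴ *ᵥ ψ) ⬝ᵥ (H - (E : 𝕜) • 1) *ᵥ (Aᴴ *ᵥ ψ) := by
  have hAA : A * Aᴴ = A * 1 * Aᴴ := by rw [Matrix.mul_one]
  rw [sub_mulVec, dotProduct_sub, smul_mulVec, dotProduct_smul,
    hH.dotProduct_mul_add_mul_mulVec_of_mulVec_eq_smul heig, hAA,
    dotProduct_mul_mul_conjTranspose_mulVec, dotProduct_mul_mul_conjTranspose_mulVec,
    sub_mulVec, dotProduct_sub, smul_mulVec, dotProduct_smul, one_mulVec, smul_eq_mul,
    smul_eq_mul]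
  ring

open scoped MatrixOrder in
theorem posSemidef_sub_smul_one_of_le_eigenvalues [DecidableEq ι] (hH : H.IsHermitian)
    (hmin : ∀ i, E ≤ hH.eigenvalues i) : (H - (E : 𝕜) • 1).PosSemidef := by
  have hle : algebraMap ℝ (Matrix ι ι 𝕜) E ≤ H := by
    rw [algebraMap_le_iff_le_spectrum hH, hH.spectrum_real_eq_range_eigenvalues]
    rintro _ ⟨i, rfl⟩
    exact hmin i
  rwa [le_iff, Algebra.algebraMap_eq_smul_one, ← algebraMap_smul 𝕜 E (1 : Matrix ι ι 𝕜)] at hle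

end IsHermitian

end Matrix

theorem stmt_10_general {n : ℕ} (H : Matrix (Fin n) (Fin n) ℂ) (hH : H.IsHermitian)
    (E : ℝ) (hmin : ∀ i : Fin n, E ≤ hH.eigenvalues i)
    (ψ : Fin n → ℂ)
    (heig : H *ᵥ ψ = (E : ℂ) • ψ)
    (A : Matrix (Fin n) (Fin n) ℂ) :
    (dotProduct (star ψ)
        ((A * H * Aᴴ - (1 / 2 : ℂ) • (H * (A * Aᴴ) + (A * Aᴴ) * H)) *ᵥ ψ)).im = 0 ∧
    0 ≤ (dotProduct (star ψ)
        ((A * H * Aᴴ - (1 / 2 : ℂ) • (H * (A * Aᴴ) + (A * Aᴴ) * H)) *ᵥ ψ)).re := by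
  rw [hH.dotProduct_sub_half_anticomm_mulVec_of_mulVec_eq_smul heig]
  obtain ⟨hre, him⟩ := Complex.nonneg_iff.mp
    ((hH.posSemidef_sub_smul_one_of_le_eigenvalues hmin).dotProduct_mulVec_nonneg (Aᴴ *ᵥ ψ))
  exact ⟨him.symm, hre⟩

theorem stmt_10 {n : ℕ} (H : Matrix (Fin n) (Fin n) ℂ) (hH : H.IsHermitian)
    (E : ℝ) (hmin : ∀ i : Fin n, E ≤ hH.eigenvalues i)
    (ψ : Fin n → ℂ) (hunit : dotProduct (star ψ) ψ = 1)
    (heig : H *ᵥ ψ = (E : ℂ) • ψ)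
    (A : Matrix (Fin n) (Fin n) ℂ) :
    (dotProduct (star ψ)
        ((A * H * Aᴴ - (1 / 2 : ℂ) • (H * (A * Aᴴ) + (A * Aᴴ) * H)) *ᵥ ψ)).im = 0 ∧
    0 ≤ (dotProduct (star ψ)
        ((A * H * Aᴴ - (1 / 2 : ℂ) • (H * (A * Aᴴ) + (A * Aᴴ) * H)) *ᵥ ψ)).re :=
  stmt_10_general H hH E hmin ψ heig A
end

section
/- Let M be a Hermitian matrix indexed by a finite set of monomials partitioned into two groups B₁ and B₂, such that the blocks satisfy: the B₁×B₁ block equals A + iB with A real symmetric and B real antisymmetric, the B₂×B₂ block equals E + iF with E real symmetric and F real antisymmetric, and the B₁×B₂ block equals C + iD with C, D real. Then M ⪰ 0 implies the real matrix [[A, D], [Dᵀ, E]] is positive semidefinite. -/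
open Matrix ComplexOrder

/-!
Conjugating `M` by the unitary `diag(1, -i)` multiplies the off-diagonal block `C + iD` by `-i`,
giving `D - iC`, so the real part of the conjugated matrix is `[[A, D], [Dᵀ, E]]`. The real part
of a positive semidefinite matrix is positive semidefinite, since for a real vector `x` one has
`xᵀ (Re Z) x = Re (x* Z x)`.
-/

namespace Matrix

section RCLike

variable {𝕜 ι : Type*} [RCLike 𝕜]

theorem IsHermitian.map_re {Z : Matrix ι ι 𝕜} (hZ : Z.IsHermitian) :
    (Z.map RCLike.re).IsHermitian := by
  rw [IsHermitian, ← conjTranspose_map _ fun z ↦ by simp, hZ.eq]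

variable [Fintype ι]

theorem re_dotProduct_mulVec_ofReal (Z : Matrix ι ι 𝕜) (x : ι → ℝ) :
    RCLike.re (star (fun i ↦ (x i : 𝕜)) ⬝ᵥ Z *ᵥ fun i ↦ (x i : 𝕜)) =
      x ⬝ᵥ Z.map RCLike.re *ᵥ x := by
  simp [dotProduct, mulVec, Finset.mul_sum, mul_left_comm]

theorem PosSemidef.map_re {Z : Matrix ι ι 𝕜} (hZ : Z.PosSemidef) :
    (Z.map RCLike.re).PosSemidef :=
  .of_dotProduct_mulVec_nonneg hZ.isHermitian.map_re fun x ↦ by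
    simpa only [star_trivial, ← re_dotProduct_mulVec_ofReal] using
      (RCLike.nonneg_iff.mp (hZ.dotProduct_mulVec_nonneg _)).1

end RCLike

theorem PosSemidef.fromBlocks_smul_offDiag {R n m : Type*} [CommRing R] [PartialOrder R]
    [StarRing R] [Fintype n] [Fintype m] [DecidableEq n] [DecidableEq m]
    {P : Matrix n n R} {Q : Matrix n m R} {S : Matrix m m R} {c : R} (hc : star c * c = 1)
    (h : (fromBlocks P Q Qᴴ S).PosSemidef) : (fromBlocks P (c • Q) (c • Q)ᴴ S).PosSemidef := by
  convert h.conjTranspose_mul_mul_same (fromBlocks 1 0 0 (c • 1) : Matrix (n ⊕ m) (n ⊕ m) R)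
  simp [fromBlocks_conjTranspose, fromBlocks_multiply, smul_smul, mul_comm c, hc]

section ComplexBlocks

variable {n m : Type*}

theorem map_re_ofReal_add_I_smul (A B : Matrix n m ℝ) :
    (A.map Complex.ofReal + Complex.I • B.map Complex.ofReal).map Complex.re = A := by
  ext; simp

theorem map_re_neg_I_smul_ofReal_add_I_smul (C D : Matrix n m ℝ) :
    ((-Complex.I) • (C.map Complex.ofReal + Complex.I • D.map Complex.ofReal)).map Complex.re
      = D := by
  ext; simp

theorem conjTranspose_map_re (Z : Matrix n m ℂ) :
    Zᴴ.map Complex.re = (Z.map Complex.re)ᵀ := by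
  rw [conjTranspose_map _ fun z ↦ by simp, conjTranspose_eq_transpose_of_trivial]

end ComplexBlocks

end Matrix

theorem stmt_19_general {n m : ℕ}
    (A B : Matrix (Fin n) (Fin n) ℝ) (E F : Matrix (Fin m) (Fin m) ℝ)
    (C D : Matrix (Fin n) (Fin m) ℝ)
    (hM : (Matrix.fromBlocks
            (A.map (Complex.ofReal) + Complex.I • B.map (Complex.ofReal))
            (C.map (Complex.ofReal) + Complex.I • D.map (Complex.ofReal))
            ((C.map (Complex.ofReal) + Complex.I • D.map (Complex.ofReal))ᴴ)
            (E.map (Complex.ofReal) + Complex.I • F.map (Complex.ofReal))).PosSemidef) :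
    (Matrix.fromBlocks A D Dᵀ E).PosSemidef := by
  have h : ((_ : Matrix _ _ ℂ).map Complex.re).PosSemidef :=
    (hM.fromBlocks_smul_offDiag (c := -Complex.I) (by simp)).map_re
  rwa [fromBlocks_map, conjTranspose_map_re, map_re_ofReal_add_I_smul, map_re_ofReal_add_I_smul,
    map_re_neg_I_smul_ofReal_add_I_smul] at h

theorem stmt_19 {n m : ℕ}
    (A B : Matrix (Fin n) (Fin n) ℝ) (E F : Matrix (Fin m) (Fin m) ℝ)
    (C D : Matrix (Fin n) (Fin m) ℝ)
    (hA : Aᵀ = A) (hB : Bᵀ = -B) (hE : Eᵀ = E) (hF : Fᵀ = -F)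
    (hM : (Matrix.fromBlocks
            (A.map (Complex.ofReal) + Complex.I • B.map (Complex.ofReal))
            (C.map (Complex.ofReal) + Complex.I • D.map (Complex.ofReal))
            ((C.map (Complex.ofReal) + Complex.I • D.map (Complex.ofReal))ᴴ)
            (E.map (Complex.ofReal) + Complex.I • F.map (Complex.ofReal))).PosSemidef) :
    (Matrix.fromBlocks A D Dᵀ E).PosSemidef :=
  stmt_19_general A B E F C D hM
end
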